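/- arXiv:2106.01957 — 2 statements merged into one kernel-verified Lean document; each statement's English description precedes it below -/
import Mathlib

section
/- Let X be a metric space and f : X → X a function. The autonomous dynamical system (X,f) has shadowing if and only if for all ε > 0 there exists δ > 0 such that for every sequence (g_i)_{i∈ℕ} of functions from X to X with sup_{i∈ℕ} sup_{x∈X} d(g_i(x), f(x)) < δ, every (g_i)-orbit is ε-shadowed by an f-orbit. -/
/-! Orbits of maps uniformly `δ`-close to `f` are `δ`-pseudo-orbits of `f`. Conversely, a
`δ`-pseudo-orbit `(x_i)` is the orbit of `x_0` under the maps `g_i` that agree with `f` except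
that they send `x_i` to `x_{i+1}`, and these maps are within `δ` of `f`. -/

open scoped ENNReal

/-- supremum distance `ρ(f,g) = sup_x d(f x, g x)` between self-maps. -/
noncomputable def rho {X : Type*} [PseudoMetricSpace X] (f g : X → X) : ℝ≥0∞ :=
  ⨆ x, edist (f x) (g x)

/-- supremum distance between sequences of self-maps. -/
noncomputable def rhoSeq {X : Type*} [PseudoMetricSpace X] (f g : ℕ → X → X) : ℝ≥0∞ :=
  ⨆ i, rho (f i) (g i)

/-- `seqComp f i = f_{i-1} ∘ ⋯ ∘ f_0`, with `seqComp f 0 = id`. -/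
def seqComp {X : Type*} (f : ℕ → X → X) : ℕ → X → X
  | 0 => id
  | n + 1 => f n ∘ seqComp f n

/-- The autonomous system `(X, f)` has shadowing. -/
def Shadowing {X : Type*} [MetricSpace X] (f : X → X) : Prop :=
  ∀ ε > (0 : ℝ), ∃ δ > (0 : ℝ), ∀ x : ℕ → X,
    (∀ i : ℕ, dist (f (x i)) (x (i + 1)) < δ) →
    ∃ z : X, ∀ i : ℕ, dist (x i) (f^[i] z) < ε

lemma edist_le_rhoSeq {X : Type*} [PseudoMetricSpace X] (g h : ℕ → X → X) (i : ℕ) (y : X) :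
    edist (g i y) (h i y) ≤ rhoSeq g h :=
  (le_iSup (fun y => edist (g i y) (h i y)) y).trans (le_iSup (fun j => rho (g j) (h j)) i)

lemma seqComp_succ_apply {X : Type*} (g : ℕ → X → X) (i : ℕ) (x : X) :
    seqComp g (i + 1) x = g i (seqComp g i x) :=
  rfl

lemma dist_seqComp_succ_lt {X : Type*} [PseudoMetricSpace X] {f : X → X} {g : ℕ → X → X}
    {δ : ℝ} (hg : rhoSeq g (fun _ => f) < ENNReal.ofReal δ) (x : X) (i : ℕ) :
    dist (f (seqComp g i x)) (seqComp g (i + 1) x) < δ := by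
  rw [seqComp_succ_apply, dist_comm, ← edist_lt_ofReal]
  exact (edist_le_rhoSeq g (fun _ => f) i _).trans_lt hg

open Classical in
noncomputable def pseudoOrbitMaps {X : Type*} (f : X → X) (x : ℕ → X) (i : ℕ) (y : X) : X :=
  if y = x i then x (i + 1) else f y

lemma seqComp_pseudoOrbitMaps {X : Type*} (f : X → X) (x : ℕ → X) (i : ℕ) :
    seqComp (pseudoOrbitMaps f x) i (x 0) = x i := by
  induction i with
  | zero => rfl
  | succ n ih => rw [seqComp_succ_apply, ih, pseudoOrbitMaps, if_pos rfl]

lemma rhoSeq_pseudoOrbitMaps_le {X : Type*} [PseudoMetricSpace X] {f : X → X} {x : ℕ → X}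
    {δ : ℝ} (hx : ∀ i, dist (f (x i)) (x (i + 1)) ≤ δ) :
    rhoSeq (pseudoOrbitMaps f x) (fun _ => f) ≤ ENNReal.ofReal δ := by
  refine iSup_le fun i => iSup_le fun y => ?_
  by_cases hy : y = x i
  · rw [pseudoOrbitMaps, if_pos hy, hy, edist_comm, edist_dist]
    exact ENNReal.ofReal_le_ofReal (hx i)
  · simp only [pseudoOrbitMaps, if_neg hy, edist_self, zero_le]

theorem stmt3 {X : Type*} [MetricSpace X] (f : X → X) :
    Shadowing f ↔
      ∀ ε > (0 : ℝ), ∃ δ > (0 : ℝ), ∀ g : ℕ → X → X,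
        rhoSeq g (fun _ => f) < ENNReal.ofReal δ →
        ∀ x : X, ∃ z : X, ∀ i : ℕ, dist (seqComp g i x) (f^[i] z) < ε := by
  constructor
  · intro hf ε hε
    obtain ⟨δ, hδ, hshadow⟩ := hf ε hε
    exact ⟨δ, hδ, fun g hg x => hshadow _ (dist_seqComp_succ_lt hg x)⟩
  · intro hg ε hε
    obtain ⟨δ, hδ, hshadow⟩ := hg ε hε
    refine ⟨δ / 2, half_pos hδ, fun x hx => ?_⟩
    have hclose : rhoSeq (pseudoOrbitMaps f x) (fun _ => f) < ENNReal.ofReal δ :=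
      (rhoSeq_pseudoOrbitMaps_le fun i => (hx i).le).trans_lt
        ((ENNReal.ofReal_lt_ofReal_iff hδ).mpr (half_lt_self hδ))
    obtain ⟨z, hz⟩ := hshadow _ hclose (x 0)
    exact ⟨z, fun i => seqComp_pseudoOrbitMaps f x i ▸ hz i⟩
end

section
/- Let X be a perturbable metric space, f : X → X continuous, and δ > 0. Then there exists γ > 0 such that if (x_i)_{i∈ℕ} is a γ-pseudo-orbit for f with the property that x_i = x_j implies x_{i+1} = x_{j+1}, then for every natural number N there exists a continuous function g : X → X with ρ(g,f) < δ and a point z ∈ X such that g^i(z) = x_i for all i ≤ N. -/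
open scoped ENNReal

/-- A metric space is perturbable. -/
def Perturbable (X : Type*) [MetricSpace X] : Prop :=
  ∀ ε > (0 : ℝ), ∃ δ > (0 : ℝ), ∀ f : X → X, Continuous f →
    ∀ F : Finset X, ∀ g₀ : X → X, (∀ x ∈ F, dist (g₀ x) (f x) < δ) →
      ∃ g : X → X, Continuous g ∧ rho f g < ENNReal.ofReal ε ∧ ∀ x ∈ F, g x = g₀ x

lemma rho_comm {X : Type*} [PseudoMetricSpace X] (f g : X → X) : rho f g = rho g f := by
  simp [rho, edist_comm]

theorem stmt11 {X : Type*} [MetricSpace X] (hX : Perturbable X)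
    (f : X → X) (hf : Continuous f) (δ : ℝ) (hδ : 0 < δ) :
    ∃ γ > (0 : ℝ), ∀ x : ℕ → X, (∀ i : ℕ, dist (f (x i)) (x (i + 1)) < γ) →
      (∀ i j : ℕ, x i = x j → x (i + 1) = x (j + 1)) →
      ∀ N : ℕ, ∃ g : X → X, Continuous g ∧ rho g f < ENNReal.ofReal δ ∧
        ∃ z : X, ∀ i ≤ N, g^[i] z = x i := by
  classical
  obtain ⟨γ, hγ, hP⟩ := hX δ hδ
  refine ⟨γ, hγ, fun x hpo hinj N => ?_⟩
  set F : Finset X := (Finset.range (N + 1)).image x with hF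
  set g₀ : X → X := fun y =>
    if h : ∃ i, i ≤ N ∧ x i = y then x (h.choose + 1) else f y with hg₀
  have hg₀x : ∀ i ≤ N, g₀ (x i) = x (i + 1) := by
    intro i hi
    have h : ∃ j, j ≤ N ∧ x j = x i := ⟨i, hi, rfl⟩
    simp only [hg₀, dif_pos h]
    exact hinj _ _ h.choose_spec.2
  have hclose : ∀ y ∈ F, dist (g₀ y) (f y) < γ := by
    intro y hy
    simp only [hF, Finset.mem_image, Finset.mem_range] at hy
    obtain ⟨i, hi, rfl⟩ := hy
    rw [hg₀x i (Nat.lt_succ_iff.mp hi), dist_comm]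
    exact hpo i
  obtain ⟨g, hgc, hgf, hgF⟩ := hP f hf F g₀ hclose
  refine ⟨g, hgc, by rwa [rho_comm], x 0, ?_⟩
  intro i hi
  induction i with
  | zero => simp
  | succ n ih =>
    rw [Function.iterate_succ_apply', ih (Nat.le_of_succ_le hi)]
    have hn : n ≤ N := Nat.le_of_succ_le hi
    have hmem : x n ∈ F := by
      simp only [hF, Finset.mem_image, Finset.mem_range]
      exact ⟨n, Nat.lt_succ_of_le hn, rfl⟩
    rw [hgF _ hmem, hg₀x n hn]
end
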